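/- Let f be a semi-quasihomogeneous polynomial with quasi-homogeneous part g of degree d with respect to coprime weights w₁, w₂ > 1, such that neither x nor y divides g and g has an isolated singularity. Then i_f is semi-quasihomogeneous of degree 3d − 2w₁ − 2w₂, i.e., the weighted-degree-(3d−2w₁−2w₂) part of i_f equals i_g and all other terms of i_f have higher weighted degree. -/

import Mathlib

open MvPolynomial

set_option linter.unusedSectionVars false



namespace SQH
variable {σ : Type*} [DecidableEq σ]

lemma coeff_pderiv (i : σ) (p : MvPolynomial σ ℂ) (e : σ →₀ ℕ) :
    coeff e (pderiv i p) = (e i + 1) * coeff (e + Finsupp.single i 1) p := by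
  induction p using MvPolynomial.induction_on' with
  | monomial s a =>
    rw [pderiv_monomial]
    rw [coeff_monomial, coeff_monomial]
    split_ifs with h1 h2 h2
    · subst h2
      simp [Finsupp.add_apply, mul_comm]
    · have hsi : s i = 0 := by
        by_contra hne
        exact h2 (by rw [← h1, tsub_add_cancel_of_le (Finsupp.single_le_iff.mpr
          (Nat.one_le_iff_ne_zero.mpr hne))])
      simp [hsi]
    · exact absurd (by rw [h2, add_tsub_cancel_right]) h1
    · rw [mul_zero]
  | add p q hp hq => simp [hp, hq, mul_add]

variable (w : σ → ℕ)

lemma weight_single_one (i : σ) : Finsupp.weight w (Finsupp.single i 1) = w i := by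
  simp [Finsupp.weight_apply, Finsupp.sum_single_index]

/-- all terms of `p` have weighted degree at least `m` -/
def Ge (m : ℕ) (p : MvPolynomial σ ℂ) : Prop :=
  ∀ e ∈ p.support, m ≤ Finsupp.weight w e

lemma ge_mono {m n : ℕ} {p} (h : Ge w n p) (hmn : m ≤ n) : Ge w m p :=
  fun e he => le_trans hmn (h e he)

lemma ge_of_wh {p : MvPolynomial σ ℂ} {d : ℕ} (h : IsWeightedHomogeneous w p d) : Ge w d p :=
  fun e he => le_of_eq (h (mem_support_iff.mp he)).symm

lemma ge_add {m : ℕ} {p q} (hp : Ge w m p) (hq : Ge w m q) : Ge w m (p + q) := by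
  intro e he
  rcases Finset.mem_union.mp (MvPolynomial.support_add he) with h | h
  exacts [hp e h, hq e h]

lemma ge_neg {m : ℕ} {p} (hp : Ge w m p) : Ge w m (-p) := by
  intro e he
  exact hp e (by simpa using he)

lemma ge_mul {m n : ℕ} {p q} (hp : Ge w m p) (hq : Ge w n q) : Ge w (m + n) (p * q) := by
  intro e he
  obtain ⟨a, ha, b, hb, rfl⟩ := Finset.mem_add.mp (MvPolynomial.support_mul p q he)
  rw [map_add]
  exact Nat.add_le_add (hp a ha) (hq b hb)

lemma ge_pderiv {m : ℕ} {p} (i : σ) (hp : Ge w m p) : Ge w (m - w i) (pderiv i p) := by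
  intro e he
  rw [mem_support_iff, coeff_pderiv] at he
  have h2 : coeff (e + Finsupp.single i 1) p ≠ 0 := fun h => he (by rw [h, mul_zero])
  have := hp _ (mem_support_iff.mpr h2)
  rw [map_add, weight_single_one] at this
  omega

lemma wh_pderiv {p : MvPolynomial σ ℂ} {d : ℕ} (i : σ) (h : IsWeightedHomogeneous w p d) :
    IsWeightedHomogeneous w (pderiv i p) (d - w i) := by
  intro e he
  rw [coeff_pderiv] at he
  have h2 := h (show coeff (e + Finsupp.single i 1) p ≠ 0 from
    fun h' => he (by rw [h', mul_zero]))
  rw [map_add, weight_single_one] at h2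
  omega

lemma wh_neg {p : MvPolynomial σ ℂ} {d : ℕ} (h : IsWeightedHomogeneous w p d) :
    IsWeightedHomogeneous w (-p) d := by
  intro e he
  exact h (by simpa using he)

lemma ge_cross {a b c : ℕ} {p p' q q' r r' : MvPolynomial σ ℂ}
    (hp : Ge w a p) (hp' : Ge w (a + 1) p') (hq : Ge w b q) (hq' : Ge w (b + 1) q')
    (hr : Ge w c r) (hr' : Ge w (c + 1) r') :
    Ge w (a + b + c + 1) ((p + p') * (q + q') * (r + r') - p * q * r) := by
  have key : (p + p') * (q + q') * (r + r') - p * q * r =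
      p' * ((q + q') * (r + r')) + (p * (q' * (r + r')) + p * (q * r')) := by ring
  rw [key]
  have hqq : Ge w b (q + q') := ge_add w hq (ge_mono w hq' (by omega))
  have hrr : Ge w c (r + r') := ge_add w hr (ge_mono w hr' (by omega))
  refine ge_add w (ge_mono w (ge_mul w hp' (ge_mul w hqq hrr)) (by omega))
    (ge_add w (ge_mono w (ge_mul w hp (ge_mul w hq' hrr)) (by omega))
      (ge_mono w (ge_mul w hp (ge_mul w hq hr')) (by omega)))

lemma x_dvd (i : σ) (p : MvPolynomial σ ℂ) (h : ∀ e ∈ p.support, e i ≠ 0) :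
    X i ∣ p := by
  conv_rhs => rw [p.as_sum]
  refine Finset.dvd_sum fun e he => ?_
  rw [show (X i : MvPolynomial σ ℂ) = monomial (Finsupp.single i 1) 1 from rfl]
  exact monomial_dvd_monomial.mpr
    ⟨Or.inr (Finsupp.single_le_iff.mpr (Nat.one_le_iff_ne_zero.mpr (h e he))), one_dvd _⟩

lemma wfin2 (w₁ w₂ : ℕ) (e : Fin 2 →₀ ℕ) :
    Finsupp.weight ![w₁, w₂] e = w₁ * e 0 + w₂ * e 1 := by
  rw [Finsupp.weight_apply, Finsupp.sum_fintype _ _ (fun i => by simp)]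
  simp [Fin.sum_univ_two, mul_comm]

end SQH

open SQH

/-- `i_f = f_y² f_xx - 2 f_x f_y f_xy + f_x² f_yy` for a two-variable polynomial. -/
noncomputable def iPoly (f : MvPolynomial (Fin 2) ℂ) : MvPolynomial (Fin 2) ℂ :=
  (pderiv 1 f) ^ 2 * pderiv 0 (pderiv 0 f) -
    2 * pderiv 0 f * pderiv 1 f * pderiv 0 (pderiv 1 f) +
    (pderiv 0 f) ^ 2 * pderiv 1 (pderiv 1 f)

/-- If `f` is semi-quasihomogeneous with quasi-homogeneous part `g` of degree `d` in
coprime weights `w₁, w₂ > 1`, neither `x` nor `y` divides `g`, and `g` has an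
isolated singularity, then `i_f` is semi-quasihomogeneous of degree `3d - 2w₁ - 2w₂`
with quasi-homogeneous part `i_g`. -/
theorem iPoly_semiQuasihomogeneous (w₁ w₂ d : ℕ) (hw₁ : 1 < w₁) (hw₂ : 1 < w₂)
    (hco : Nat.Coprime w₁ w₂) (f g : MvPolynomial (Fin 2) ℂ)
    (hg : g.IsWeightedHomogeneous ![w₁, w₂] d)
    (hfg : ∀ e ∈ (f - g).support, d < w₁ * e 0 + w₂ * e 1)
    (hx : ¬ (X 0 : MvPolynomial (Fin 2) ℂ) ∣ g)
    (hy : ¬ (X 1 : MvPolynomial (Fin 2) ℂ) ∣ g)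
    (hiso : ∀ p : Fin 2 → ℂ, eval p (pderiv 0 g) = 0 → eval p (pderiv 1 g) = 0 → p = 0) :
    (iPoly g).IsWeightedHomogeneous ![w₁, w₂] (3 * d - 2 * w₁ - 2 * w₂) ∧
      ∀ e ∈ (iPoly f - iPoly g).support,
        3 * d - 2 * w₁ - 2 * w₂ < w₁ * e 0 + w₂ * e 1 := by
  set w : Fin 2 → ℕ := ![w₁, w₂] with hw
  have hw0 : w 0 = w₁ := rfl
  have hw1 : w 1 = w₂ := rfl
  -- divisibility facts
  have hw2d : w₂ ∣ d := by
    have h1 : ∃ e ∈ g.support, e 0 = 0 := by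
      by_contra h
      push_neg at h
      exact hx (x_dvd 0 g h)
    obtain ⟨e₁, he₁, he₁0⟩ := h1
    have := hg (mem_support_iff.mp he₁)
    rw [wfin2, he₁0, mul_zero, zero_add] at this
    exact ⟨e₁ 1, this.symm⟩
  have hw1d : w₁ ∣ d := by
    have h1 : ∃ e ∈ g.support, e 1 = 0 := by
      by_contra h
      push_neg at h
      exact hy (x_dvd 1 g h)
    obtain ⟨e₂, he₂, he₂0⟩ := h1
    have := hg (mem_support_iff.mp he₂)
    rw [wfin2, he₂0, mul_zero, add_zero] at this
    exact ⟨e₂ 0, this.symm⟩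
  have hd0 : d ≠ 0 := by
    rintro rfl
    have hzero : ∀ i : Fin 2, pderiv i g = 0 := by
      intro i
      apply MvPolynomial.ext
      intro e
      rw [SQH.coeff_pderiv, coeff_zero]
      rcases eq_or_ne (coeff (e + Finsupp.single i 1) g) 0 with h | h
      · rw [h, mul_zero]
      · exfalso
        have h2 := hg h
        rw [map_add, weight_single_one] at h2
        fin_cases i <;> simp [hw0, hw1] at h2 <;> omega
    have := hiso (fun _ => 1) (by rw [hzero 0]; simp) (by rw [hzero 1]; simp)
    exact one_ne_zero (congrFun this 0)
  have hdle : w₁ * w₂ ≤ d := Nat.le_of_dvd (Nat.pos_of_ne_zero hd0)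
    (hco.mul_dvd_of_dvd_of_dvd hw1d hw2d)
  have hd1 : 2 * w₁ ≤ d := le_trans (by nlinarith) hdle
  have hd2 : 2 * w₂ ≤ d := le_trans (by nlinarith) hdle
  -- weighted homogeneity of the derivatives of g
  have hgx : IsWeightedHomogeneous w (pderiv 0 g) (d - w₁) := wh_pderiv w 0 hg
  have hgy : IsWeightedHomogeneous w (pderiv 1 g) (d - w₂) := wh_pderiv w 1 hg
  have hgxx : IsWeightedHomogeneous w (pderiv 0 (pderiv 0 g)) (d - w₁ - w₁) :=
    wh_pderiv w 0 hgx
  have hgxy : IsWeightedHomogeneous w (pderiv 0 (pderiv 1 g)) (d - w₂ - w₁) :=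
    wh_pderiv w 0 hgy
  have hgyy : IsWeightedHomogeneous w (pderiv 1 (pderiv 1 g)) (d - w₂ - w₂) :=
    wh_pderiv w 1 hgy
  constructor
  · -- part 1
    have t1 : IsWeightedHomogeneous w ((pderiv 1 g) ^ 2 * pderiv 0 (pderiv 0 g))
        ((d - w₂) + (d - w₂) + (d - w₁ - w₁)) := by
      rw [sq]
      exact (hgy.mul hgy).mul hgxx
    have t2 : IsWeightedHomogeneous w (2 * pderiv 0 g * pderiv 1 g * pderiv 0 (pderiv 1 g))
        (0 + (d - w₁) + (d - w₂) + (d - w₂ - w₁)) := by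
      have hC : IsWeightedHomogeneous w (2 : MvPolynomial (Fin 2) ℂ) 0 := by
        rw [show (2 : MvPolynomial (Fin 2) ℂ) = C 2 from (map_ofNat C 2).symm]
        exact isWeightedHomogeneous_C w 2
      exact ((hC.mul hgx).mul hgy).mul hgxy
    have t3 : IsWeightedHomogeneous w ((pderiv 0 g) ^ 2 * pderiv 1 (pderiv 1 g))
        ((d - w₁) + (d - w₁) + (d - w₂ - w₂)) := by
      rw [sq]
      exact (hgx.mul hgx).mul hgyy
    rw [show (d - w₂) + (d - w₂) + (d - w₁ - w₁) = 3 * d - 2 * w₁ - 2 * w₂ by omega] at t1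
    rw [show 0 + (d - w₁) + (d - w₂) + (d - w₂ - w₁) = 3 * d - 2 * w₁ - 2 * w₂ by omega] at t2
    rw [show (d - w₁) + (d - w₁) + (d - w₂ - w₂) = 3 * d - 2 * w₁ - 2 * w₂ by omega] at t3
    rw [iPoly, sub_eq_add_neg]
    exact (t1.add (wh_neg w t2)).add t3
  · -- part 2
    set h : MvPolynomial (Fin 2) ℂ := f - g with hhdef
    have hf : f = g + h := by ring
    have hh : Ge w (d + 1) h := by
      intro e he
      rw [wfin2]
      exact hfg e he
    have ggx : Ge w (d - w₁) (pderiv 0 g) := ge_of_wh w hgx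
    have ggy : Ge w (d - w₂) (pderiv 1 g) := ge_of_wh w hgy
    have ggxx : Ge w (d - w₁ - w₁) (pderiv 0 (pderiv 0 g)) := ge_of_wh w hgxx
    have ggxy : Ge w (d - w₂ - w₁) (pderiv 0 (pderiv 1 g)) := ge_of_wh w hgxy
    have ggyy : Ge w (d - w₂ - w₂) (pderiv 1 (pderiv 1 g)) := ge_of_wh w hgyy
    have ghx : Ge w ((d - w₁) + 1) (pderiv 0 h) :=
      ge_mono w (ge_pderiv w 0 hh) (by rw [hw0]; omega)
    have ghy : Ge w ((d - w₂) + 1) (pderiv 1 h) :=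
      ge_mono w (ge_pderiv w 1 hh) (by rw [hw1]; omega)
    have ghxx : Ge w ((d - w₁ - w₁) + 1) (pderiv 0 (pderiv 0 h)) :=
      ge_mono w (ge_pderiv w 0 (ge_pderiv w 0 hh)) (by rw [hw0]; omega)
    have ghxy : Ge w ((d - w₂ - w₁) + 1) (pderiv 0 (pderiv 1 h)) :=
      ge_mono w (ge_pderiv w 0 (ge_pderiv w 1 hh)) (by rw [hw0, hw1]; omega)
    have ghyy : Ge w ((d - w₂ - w₂) + 1) (pderiv 1 (pderiv 1 h)) :=
      ge_mono w (ge_pderiv w 1 (ge_pderiv w 1 hh)) (by rw [hw1]; omega)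
    -- decompose the difference
    have e0 : pderiv 0 f = pderiv 0 g + pderiv 0 h := by rw [hf, map_add]
    have e1 : pderiv 1 f = pderiv 1 g + pderiv 1 h := by rw [hf, map_add]
    have key : iPoly f - iPoly g =
        ((pderiv 1 g + pderiv 1 h) * (pderiv 1 g + pderiv 1 h) *
            (pderiv 0 (pderiv 0 g) + pderiv 0 (pderiv 0 h)) -
          pderiv 1 g * pderiv 1 g * pderiv 0 (pderiv 0 g)) +
        (-(2 * ((pderiv 0 g + pderiv 0 h) * (pderiv 1 g + pderiv 1 h) *
            (pderiv 0 (pderiv 1 g) + pderiv 0 (pderiv 1 h)) -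
          pderiv 0 g * pderiv 1 g * pderiv 0 (pderiv 1 g))) +
        ((pderiv 0 g + pderiv 0 h) * (pderiv 0 g + pderiv 0 h) *
            (pderiv 1 (pderiv 1 g) + pderiv 1 (pderiv 1 h)) -
          pderiv 0 g * pderiv 0 g * pderiv 1 (pderiv 1 g))) := by
      simp only [iPoly, e0, e1, map_add]
      ring
    have c1 : Ge w ((d - w₂) + (d - w₂) + (d - w₁ - w₁) + 1) _ :=
      ge_cross w ggy ghy ggy ghy ggxx ghxx
    have c2 : Ge w ((d - w₁) + (d - w₂) + (d - w₂ - w₁) + 1) _ :=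
      ge_cross w ggx ghx ggy ghy ggxy ghxy
    have c3 : Ge w ((d - w₁) + (d - w₁) + (d - w₂ - w₂) + 1) _ :=
      ge_cross w ggx ghx ggx ghx ggyy ghyy
    have c2' : Ge w ((d - w₁) + (d - w₂) + (d - w₂ - w₁) + 1)
        (-(2 * ((pderiv 0 g + pderiv 0 h) * (pderiv 1 g + pderiv 1 h) *
            (pderiv 0 (pderiv 1 g) + pderiv 0 (pderiv 1 h)) -
          pderiv 0 g * pderiv 1 g * pderiv 0 (pderiv 1 g)))) := by
      apply ge_neg
      have h2 : Ge w 0 (2 : MvPolynomial (Fin 2) ℂ) := fun e _ => Nat.zero_le _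
      exact ge_mono w (ge_mul w h2 c2) (by omega)
    have total : Ge w (3 * d - 2 * w₁ - 2 * w₂ + 1) (iPoly f - iPoly g) := by
      rw [key]
      exact ge_add w (ge_mono w c1 (by omega))
        (ge_add w (ge_mono w c2' (by omega)) (ge_mono w c3 (by omega)))
    intro e he
    have := total e he
    rw [wfin2] at this
    omega
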